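/- Let B be a real p×q matrix, G a symmetric real q×q matrix, and G' a symmetric real p×p matrix. Let A = [[G', B, B],[Bᵀ, 0, G],[Bᵀ, G, 0]] and C = [[G', B, B],[Bᵀ, G, 0],[Bᵀ, 0, G]], both (p+2q)-square matrices. Then the (p+4q)-square matrices A ⊕ [[G, 0],[0, G]] and C ⊕ [[0, G],[G, 0]] are cospectral, i.e., they have the same characteristic polynomial (after transporting along a bijection of their index types). -/

import Mathlib

/-!
On the two copies `Fin q ⊕ Fin q` change coordinates to `(y₁ + y₂, y₁ - y₂)`. The coupling
`[B, B]` only sees the sum coordinate, and both `[[0, G], [G, 0]]` and `[[G, 0], [0, G]]` act as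
`G` on it, while on the difference coordinate they act as `-G` and `G` respectively. Hence
`A` and `C` are similar to `K ⊕ (-G)` and `K ⊕ G` for one and the same matrix `K`, while
`[[0, G], [G, 0]]` is similar to `G ⊕ (-G)`. Both sides therefore have characteristic polynomial
`χ_K · χ_G² · χ_{-G}`.
-/

open Matrix

/-- The matrix `A = [[G', B, B], [Bᵀ, 0, G], [Bᵀ, G, 0]]` of Construction IV,
indexed by `Fin p ⊕ (Fin q ⊕ Fin q)`. -/
def matA (p q : ℕ) (B : Matrix (Fin p) (Fin q) ℝ) (G : Matrix (Fin q) (Fin q) ℝ)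
    (G' : Matrix (Fin p) (Fin p) ℝ) :
    Matrix (Fin p ⊕ (Fin q ⊕ Fin q)) (Fin p ⊕ (Fin q ⊕ Fin q)) ℝ :=
  Matrix.fromBlocks G' (Matrix.fromCols B B) (Matrix.fromRows Bᵀ Bᵀ)
    (Matrix.fromBlocks 0 G G 0)

/-- The matrix `C = [[G', B, B], [Bᵀ, G, 0], [Bᵀ, 0, G]]` of Construction IV,
indexed by `Fin p ⊕ (Fin q ⊕ Fin q)`. -/
def matC4 (p q : ℕ) (B : Matrix (Fin p) (Fin q) ℝ) (G : Matrix (Fin q) (Fin q) ℝ)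
    (G' : Matrix (Fin p) (Fin p) ℝ) :
    Matrix (Fin p ⊕ (Fin q ⊕ Fin q)) (Fin p ⊕ (Fin q ⊕ Fin q)) ℝ :=
  Matrix.fromBlocks G' (Matrix.fromCols B B) (Matrix.fromRows Bᵀ Bᵀ)
    (Matrix.fromBlocks G 0 0 G)

namespace Matrix

variable {R m n : Type*} [CommRing R] [Fintype n] [DecidableEq n]

theorem charpoly_eq_of_mul_eq_mul {P M N : Matrix n n R} (hP : IsUnit P) (h : P * M = N * P) :
    M.charpoly = N.charpoly := by
  have hN : N = hP.unit.val * M * hP.unit.val⁻¹ := by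
    rw [IsUnit.unit_spec, h, Matrix.mul_assoc, mul_nonsing_inv _ ((isUnit_iff_isUnit_det P).mp hP),
      Matrix.mul_one]
  rw [hN, charpoly_units_conj]

variable (R n) in
def sumDiffMatrix : Matrix (n ⊕ n) (n ⊕ n) R := fromBlocks 1 1 1 (-1)

theorem sumDiffMatrix_mul_self : sumDiffMatrix R n * sumDiffMatrix R n = (2 : R) • 1 := by
  rw [sumDiffMatrix, fromBlocks_multiply, ← fromBlocks_one, fromBlocks_smul]
  simp [two_smul]

theorem isUnit_sumDiffMatrix [Invertible (2 : R)] : IsUnit (sumDiffMatrix R n) :=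
  IsUnit.of_mul_eq_one (⅟(2 : R) • sumDiffMatrix R n) <| by
    rw [Matrix.mul_smul, sumDiffMatrix_mul_self, smul_smul, invOf_mul_self, one_smul]

theorem sumDiffMatrix_mul_fromBlocks_zero_self (G : Matrix n n R) :
    sumDiffMatrix R n * fromBlocks 0 G G 0 = fromBlocks G 0 0 (-G) * sumDiffMatrix R n := by
  simp [sumDiffMatrix, fromBlocks_multiply]

theorem sumDiffMatrix_mul_fromBlocks_self_zero (G : Matrix n n R) :
    sumDiffMatrix R n * fromBlocks G 0 0 G = fromBlocks G 0 0 G * sumDiffMatrix R n := by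
  simp [sumDiffMatrix, fromBlocks_multiply]

theorem fromCols_zero_mul_sumDiffMatrix (B : Matrix m n R) :
    fromCols B (0 : Matrix m n R) * sumDiffMatrix R n = fromCols B B := by
  simp [sumDiffMatrix, fromCols_mul_fromBlocks]

theorem sumDiffMatrix_mul_fromRows_self (B : Matrix n m R) :
    sumDiffMatrix R n * fromRows B B = fromRows (2 • B) 0 := by
  simp [sumDiffMatrix, fromBlocks_mul_fromRows, two_smul]

variable [Fintype m] [DecidableEq m]

theorem fromBlocks_one_sumDiffMatrix_mul (G' : Matrix m m R) (B : Matrix m n R)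
    (B' : Matrix n m R) {D D' : Matrix (n ⊕ n) (n ⊕ n) R}
    (h : sumDiffMatrix R n * D = D' * sumDiffMatrix R n) :
    fromBlocks 1 0 0 (sumDiffMatrix R n) * fromBlocks G' (fromCols B B) (fromRows B' B') D =
      fromBlocks G' (fromCols B 0) (fromRows (2 • B') 0) D' *
        fromBlocks 1 0 0 (sumDiffMatrix R n) := by
  simp [fromBlocks_multiply, h, fromCols_zero_mul_sumDiffMatrix, sumDiffMatrix_mul_fromRows_self]

theorem charpoly_fromBlocks_fromCols_zero (G' : Matrix m m R) (B : Matrix m n R)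
    (B' : Matrix n m R) (D E : Matrix n n R) :
    (fromBlocks G' (fromCols B 0) (fromRows B' 0) (fromBlocks D 0 0 E)).charpoly =
      (fromBlocks G' B B' D).charpoly * E.charpoly := by
  rw [← charpoly_fromBlocks_zero₁₂ _ 0, ← charpoly_reindex (Equiv.sumAssoc m n n).symm]
  congr 1
  ext ((i | i) | i) ((j | j) | j) <;> rfl

theorem isUnit_fromBlocks_one_sumDiffMatrix [Invertible (2 : R)] :
    IsUnit (fromBlocks (1 : Matrix m m R) 0 0 (sumDiffMatrix R n)) := by
  rw [isUnit_iff_isUnit_det, det_fromBlocks_zero₁₂, det_one, one_mul, ← isUnit_iff_isUnit_det]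
  exact isUnit_sumDiffMatrix

theorem charpoly_fromBlocks_fromCols_self_fromRows_self [Invertible (2 : R)] (G' : Matrix m m R)
    (B : Matrix m n R) (B' : Matrix n m R) {D : Matrix (n ⊕ n) (n ⊕ n) R} {D₁ E : Matrix n n R}
    (h : sumDiffMatrix R n * D = fromBlocks D₁ 0 0 E * sumDiffMatrix R n) :
    (fromBlocks G' (fromCols B B) (fromRows B' B') D).charpoly =
      (fromBlocks G' B (2 • B') D₁).charpoly * E.charpoly := by
  rw [charpoly_eq_of_mul_eq_mul isUnit_fromBlocks_one_sumDiffMatrix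
    (fromBlocks_one_sumDiffMatrix_mul G' B B' h), charpoly_fromBlocks_fromCols_zero]

theorem charpoly_fromBlocks_zero_self [Invertible (2 : R)] (G : Matrix n n R) :
    (fromBlocks 0 G G 0).charpoly = G.charpoly * (-G).charpoly := by
  rw [charpoly_eq_of_mul_eq_mul isUnit_sumDiffMatrix (sumDiffMatrix_mul_fromBlocks_zero_self G),
    charpoly_fromBlocks_zero₁₂]

end Matrix

theorem construction_IV_cospectral (p q : ℕ) (B : Matrix (Fin p) (Fin q) ℝ)
    (G : Matrix (Fin q) (Fin q) ℝ) (G' : Matrix (Fin p) (Fin p) ℝ) :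
    ∃ e : ((Fin p ⊕ (Fin q ⊕ Fin q)) ⊕ (Fin q ⊕ Fin q)) ≃
        ((Fin p ⊕ (Fin q ⊕ Fin q)) ⊕ (Fin q ⊕ Fin q)),
      (Matrix.fromBlocks (matA p q B G G') 0 0 (Matrix.fromBlocks G 0 0 G)).charpoly =
        ((Matrix.fromBlocks (matC4 p q B G G') 0 0
            (Matrix.fromBlocks 0 G G 0)).submatrix e e).charpoly := by
  refine ⟨Equiv.refl _, ?_⟩
  rw [Equiv.coe_refl, submatrix_id_id]
  simp only [charpoly_fromBlocks_zero₁₂]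
  rw [matA, matC4,
    charpoly_fromBlocks_fromCols_self_fromRows_self G' B Bᵀ
      (sumDiffMatrix_mul_fromBlocks_zero_self G),
    charpoly_fromBlocks_fromCols_self_fromRows_self G' B Bᵀ
      (sumDiffMatrix_mul_fromBlocks_self_zero G),
    charpoly_fromBlocks_zero_self]
  ring
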